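/- Truncated weighted eigenvalue sum. For every δ>0, ∑_{k=1}^m (λ_k^{−1}∧δ²) ≤ (c+1)·δ²·(k(δ)+1), where k(δ) is the largest k≤m with λ_k^{−1}≥δ² (convention λ_k^{−1}=+∞ when λ_k=0, and k(δ)=0 if λ₁^{−1}<δ²). -/

import Mathlib

open scoped Classical BigOperators

noncomputable section

/-- `k(δ)`: the largest `k ≤ m` with `λ_k⁻¹ ≥ δ²` (with the convention `λ_k⁻¹ = +∞` when
`λ_k = 0`), and `k(δ) = 0` if there is no such `k`. -/
def kDelta (m : ℕ) (lam : ℕ → ℝ) (δ : ℝ) : ℕ :=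
  Finset.sup ((Finset.Icc 1 m).filter (fun k => lam k = 0 ∨ δ ^ 2 ≤ (lam k)⁻¹)) id

/-- the truncated weight `λ_k⁻¹ ∧ δ²` (`= δ²` when `λ_k = 0`) -/
def wCoef (lam : ℕ → ℝ) (δ : ℝ) (k : ℕ) : ℝ :=
  if lam k = 0 then δ ^ 2 else min (lam k)⁻¹ (δ ^ 2)

/-!
The indices `k ≤ k(δ)` contribute at most `δ²` each. Beyond `k(δ)` every weight is the
untruncated `λ_k⁻¹`, so with `s = k(δ) + 1` the tail-sum assumption bounds their total by
`c s / λ_s`, and `λ_s⁻¹ < δ²` by maximality of `k(δ)`.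
-/

section TruncatedWeights

variable {m : ℕ} {lam : ℕ → ℝ} {δ : ℝ}

lemma wCoef_le_sq (k : ℕ) : wCoef lam δ k ≤ δ ^ 2 := by
  unfold wCoef
  split
  · exact le_rfl
  · exact min_le_right _ _

lemma sum_wCoef_le_card_mul_sq (s : Finset ℕ) : ∑ k ∈ s, wCoef lam δ k ≤ s.card * δ ^ 2 := by
  simpa only [nsmul_eq_mul] using Finset.sum_le_card_nsmul s _ _ fun k _ => wCoef_le_sq k

lemma kDelta_le (m : ℕ) (lam : ℕ → ℝ) (δ : ℝ) : kDelta m lam δ ≤ m :=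
  Finset.sup_le fun _ hk => (Finset.mem_Icc.1 (Finset.mem_filter.1 hk).1).2

lemma ne_zero_and_inv_lt_sq_of_kDelta_lt {k : ℕ} (hK : kDelta m lam δ < k) (hkm : k ≤ m) :
    lam k ≠ 0 ∧ (lam k)⁻¹ < δ ^ 2 := by
  have hk : k ∉ (Finset.Icc 1 m).filter (fun k => lam k = 0 ∨ δ ^ 2 ≤ (lam k)⁻¹) :=
    fun hk => (Finset.le_sup (f := id) hk).not_gt hK
  simp only [Finset.mem_filter, Finset.mem_Icc, not_and, not_or, not_le] at hk
  exact hk ⟨by omega, hkm⟩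

lemma wCoef_eq_inv_of_kDelta_lt {k : ℕ} (hK : kDelta m lam δ < k) (hkm : k ≤ m) :
    wCoef lam δ k = (lam k)⁻¹ := by
  obtain ⟨hne, hlt⟩ := ne_zero_and_inv_lt_sq_of_kDelta_lt hK hkm
  rw [wCoef, if_neg hne, min_eq_left hlt.le]

lemma sum_Ioc_kDelta_wCoef_eq_sum_inv :
    ∑ k ∈ Finset.Ioc (kDelta m lam δ) m, wCoef lam δ k
      = ∑ k ∈ Finset.Icc (kDelta m lam δ + 1) m, (lam k)⁻¹ := by
  rw [Finset.Icc_add_one_left_eq_Ioc]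
  refine Finset.sum_congr rfl fun k hk => ?_
  obtain ⟨hKk, hkm⟩ := Finset.mem_Ioc.1 hk
  exact wCoef_eq_inv_of_kDelta_lt hKk hkm

lemma sum_Ioc_kDelta_wCoef_le {k0 : ℕ} {c : ℝ} (hc : 0 ≤ c)
    (hlam_nonneg : ∀ k, 1 ≤ k → k ≤ m → 0 ≤ lam k)
    (hk0_min : ∀ k, 1 ≤ k → k ≤ m → 0 < lam k → k0 ≤ k)
    (hsum : ∀ s, k0 ≤ s → s ≤ m → ∑ k ∈ Finset.Icc s m, (lam k)⁻¹ ≤ c * s / lam s) :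
    ∑ k ∈ Finset.Ioc (kDelta m lam δ) m, wCoef lam δ k
      ≤ c * (kDelta m lam δ + 1) * δ ^ 2 := by
  set K := kDelta m lam δ
  have hKle : K ≤ m := kDelta_le m lam δ
  rcases hKle.lt_or_eq with hKm | hKm
  · obtain ⟨hne, hlt⟩ := ne_zero_and_inv_lt_sq_of_kDelta_lt (Nat.lt_succ_self K) hKm
    have hpos : 0 < lam (K + 1) := (hlam_nonneg _ (by omega) hKm).lt_of_ne' hne
    calc ∑ k ∈ Finset.Ioc K m, wCoef lam δ k
        = ∑ k ∈ Finset.Icc (K + 1) m, (lam k)⁻¹ := sum_Ioc_kDelta_wCoef_eq_sum_inv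
      _ ≤ c * (K + 1 : ℕ) / lam (K + 1) := hsum _ (hk0_min _ (by omega) hKm hpos) hKm
      _ = c * (K + 1) * (lam (K + 1))⁻¹ := by push_cast; ring
      _ ≤ c * (K + 1) * δ ^ 2 := by gcongr
  · rw [hKm, Finset.Ioc_self, Finset.sum_empty]
    positivity

end TruncatedWeights

theorem truncated_weighted_eigenvalue_sum_general
    (m : ℕ) (c : ℝ) (hc : 0 < c)
    (lam : ℕ → ℝ) (k0 : ℕ)
    (hlam_nonneg : ∀ k, 1 ≤ k → k ≤ m → 0 ≤ lam k)
    (hk0_min : ∀ k, 1 ≤ k → k ≤ m → 0 < lam k → k0 ≤ k)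
    (hsum : ∀ s, k0 ≤ s → s ≤ m → ∑ k ∈ Finset.Icc s m, (lam k)⁻¹ ≤ c * s / lam s)
    (δ : ℝ) :
    ∑ k ∈ Finset.Icc 1 m, wCoef lam δ k ≤ (c + 1) * δ ^ 2 * (kDelta m lam δ + 1) := by
  set K := kDelta m lam δ
  have head : ∑ k ∈ Finset.Ioc 0 K, wCoef lam δ k ≤ K * δ ^ 2 := by
    simpa only [Nat.card_Ioc, Nat.sub_zero] using sum_wCoef_le_card_mul_sq (Finset.Ioc 0 K)
  have tail := sum_Ioc_kDelta_wCoef_le hc.le hlam_nonneg hk0_min hsum (δ := δ)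
  rw [← zero_add 1, Finset.Icc_add_one_left_eq_Ioc,
    ← Finset.sum_Ioc_consecutive _ K.zero_le (kDelta_le m lam δ)]
  nlinarith [sq_nonneg δ]

/-- **Truncated weighted eigenvalue sum.** Under the spectral assumptions on the eigenvalues
`0 ≤ λ₁ ≤ … ≤ λ_m` of `W`, for every `δ > 0`,
`∑_{k=1}^m (λ_k⁻¹ ∧ δ²) ≤ (c+1) δ² (k(δ)+1)`. -/
theorem truncated_weighted_eigenvalue_sum
    (m : ℕ) (hm : 2 ≤ m) (c : ℝ) (hc : 0 < c)
    (lam : ℕ → ℝ) (k0 : ℕ)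
    (hlam_nonneg : ∀ k, 1 ≤ k → k ≤ m → 0 ≤ lam k)
    (hlam_mono : ∀ k, 1 ≤ k → k < m → lam k ≤ lam (k + 1))
    (hk0_mem : 1 ≤ k0 ∧ k0 ≤ m) (hk0_pos : 0 < lam k0)
    (hk0_min : ∀ k, 1 ≤ k → k ≤ m → 0 < lam k → k0 ≤ k)
    (hratio : ∀ k, k0 ≤ k → k < m → ((k : ℝ) + 1) / lam (k + 1) ≤ (k : ℝ) / lam k)
    (hgap : ∀ k, k0 ≤ k → k < m → lam (k + 1) ≤ c * lam k)
    (hsum : ∀ s, k0 ≤ s → s ≤ m → ∑ k ∈ Finset.Icc s m, (lam k)⁻¹ ≤ c * s / lam s)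
    (δ : ℝ) (hδ : 0 < δ) :
    ∑ k ∈ Finset.Icc 1 m, wCoef lam δ k ≤ (c + 1) * δ ^ 2 * (kDelta m lam δ + 1) :=
  truncated_weighted_eigenvalue_sum_general m c hc lam k0 hlam_nonneg hk0_min hsum δ

end
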